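/- arXiv:2210.12277 — 2 statements merged into one kernel-verified Lean document; each statement's English description precedes it below -/
import Mathlib

section
/- Let C ⊆ ℝ^p be a nonempty closed convex set with nearest-point projection P_C, let θ* ∈ C, let g : ℝ^p → ℝ be convex and differentiable with L-Lipschitz gradient (L > 0), let ρ > 0, and let w = P_C(w') for some w' ∈ ℝ^p and θ⁺ ∈ ℝ^p satisfy the implicit update θ⁺ = w − (1/ρ)∇g(θ⁺). Then ‖P_C(θ⁺) − θ*‖² ≤ (1 + 4L²/ρ²)‖w − θ*‖² − (2/ρ)(g(w) − g(θ*)) + (4/ρ²)‖∇g(θ*)‖². -/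
/-!
Writing `θ⁺ = w - s ∇g(θ⁺)` with `s = 1/ρ`, the identity
`‖θ⁺ - θ*‖² = ‖w - θ*‖² - 2s⟪θ⁺ - θ*, ∇g(θ⁺)⟫ - s²‖∇g(θ⁺)‖²` together with the gradient
inequality of `g` at `θ⁺` (towards `θ*`) and at `w` (towards `θ⁺`) gives
`‖θ⁺ - θ*‖² ≤ ‖w - θ*‖² - 2s(g(w) - g(θ*)) + s²‖∇g(w)‖²`.
The Lipschitz bound `‖∇g(w)‖² ≤ 2L²‖w - θ*‖² + 2‖∇g(θ*)‖²` and the fact that projecting onto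
a convex set does not increase the distance to its points finish the proof.
-/

open RealInnerProductSpace Set

theorem ConvexOn.add_fderiv_sub_le {E : Type*} [NormedAddCommGroup E] [NormedSpace ℝ E]
    {f : E → ℝ} {f' : E →L[ℝ] ℝ} {x : E} (hf : ConvexOn ℝ univ f) (hx : HasFDerivAt f f' x)
    (y : E) : f x + f' (y - x) ≤ f y := by
  have hline : ConvexOn ℝ univ (f ∘ AffineMap.lineMap (k := ℝ) x y) :=
    hf.comp_affineMap (AffineMap.lineMap x y)
  have hderiv : HasDerivAt (f ∘ AffineMap.lineMap (k := ℝ) x y) (f' (y - x)) 0 := by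
    have hx' : HasFDerivAt f f' (AffineMap.lineMap x y (0 : ℝ)) := by simpa using hx
    exact hx'.comp_hasDerivAt 0 AffineMap.hasDerivAt_lineMap
  have hslope := hline.le_slope_of_hasDerivAt (mem_univ 0) (mem_univ 1) one_pos hderiv
  simp only [slope_def_field, Function.comp_apply, AffineMap.lineMap_apply_zero,
    AffineMap.lineMap_apply_one, sub_zero, div_one] at hslope
  linarith

theorem ConvexOn.add_inner_gradient_sub_le {E : Type*} [NormedAddCommGroup E]
    [InnerProductSpace ℝ E] [CompleteSpace E] {f : E → ℝ} {x : E} (hf : ConvexOn ℝ univ f)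
    (hx : DifferentiableAt ℝ f x) (y : E) : f x + ⟪gradient f x, y - x⟫ ≤ f y := by
  simpa using hf.add_fderiv_sub_le (hasGradientAt_iff_hasFDerivAt.mp hx.hasGradientAt) y

theorem Convex.norm_sub_le_of_forall_norm_sub_le {F : Type*} [NormedAddCommGroup F]
    [InnerProductSpace ℝ F] {K : Set F} (hK : Convex ℝ K) {x p y : F} (hp : p ∈ K)
    (hnearest : ∀ z ∈ K, ‖x - p‖ ≤ ‖x - z‖) (hy : y ∈ K) : ‖p - y‖ ≤ ‖x - y‖ := by
  have : Nonempty K := ⟨⟨p, hp⟩⟩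
  have hinf : ‖x - p‖ = ⨅ z : K, ‖x - z‖ :=
    le_antisymm (le_ciInf fun z ↦ hnearest z z.2)
      (ciInf_le ⟨0, by rintro _ ⟨z, rfl⟩; positivity⟩ (⟨p, hp⟩ : K))
  have hobtuse : ⟪x - p, y - p⟫ ≤ 0 := (norm_eq_iInf_iff_real_inner_le_zero hK hp).mp hinf y hy
  have hexpand : ‖x - y‖ ^ 2 = ‖x - p‖ ^ 2 - 2 * ⟪x - p, y - p⟫ + ‖p - y‖ ^ 2 := by
    rw [← norm_sub_rev y p, ← norm_sub_sq_real]
    congr 2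
    abel
  refine (sq_le_sq₀ (norm_nonneg _) (norm_nonneg _)).mp ?_
  nlinarith [sq_nonneg ‖x - p‖]

theorem norm_implicit_gradient_step_sub_sq_le {E : Type*} [NormedAddCommGroup E]
    [InnerProductSpace ℝ E] [CompleteSpace E] {g : E → ℝ} (hg : ConvexOn ℝ univ g)
    (hgd : Differentiable ℝ g) {s : ℝ} (hs : 0 ≤ s) {w θ : E}
    (hθ : θ = w - s • gradient g θ) (x : E) :
    ‖θ - x‖ ^ 2 ≤ ‖w - x‖ ^ 2 - 2 * s * (g w - g x) + s ^ 2 * ‖gradient g w‖ ^ 2 := by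
  set G := gradient g θ
  set Gw := gradient g w
  have hθx : ‖θ - x‖ ^ 2 = ‖w - x‖ ^ 2 - 2 * s * ⟪θ - x, G⟫ - s ^ 2 * ‖G‖ ^ 2 := by
    have : w - x = (θ - x) + s • G := by rw [hθ]; abel
    rw [this, norm_add_sq_real, real_inner_smul_right, norm_smul, mul_pow,
      Real.norm_eq_abs, sq_abs]
    ring
  have hconv_θ : g θ - g x ≤ ⟪θ - x, G⟫ := by
    have h := hg.add_inner_gradient_sub_le (hgd θ) x
    rw [← neg_sub θ x, inner_neg_right, real_inner_comm] at h
    linarith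
  have hconv_w : g w - s * ⟪Gw, G⟫ ≤ g θ := by
    have h := hg.add_inner_gradient_sub_le (hgd w) θ
    rw [show θ - w = -(s • G) by rw [hθ]; abel, inner_neg_right, real_inner_smul_right] at h
    linarith
  have hyoung : 2 * ⟪Gw, G⟫ - ‖G‖ ^ 2 ≤ ‖Gw‖ ^ 2 := by
    nlinarith [norm_sub_sq_real Gw G, sq_nonneg ‖Gw - G‖]
  nlinarith [mul_le_mul_of_nonneg_left hconv_θ hs, mul_le_mul_of_nonneg_left hconv_w hs,
    mul_le_mul_of_nonneg_left hyoung (sq_nonneg s)]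

theorem norm_sq_le_of_norm_sub_le {E : Type*} [SeminormedAddCommGroup E] {a b : E} {r : ℝ}
    (h : ‖a - b‖ ≤ r) : ‖a‖ ^ 2 ≤ 2 * r ^ 2 + 2 * ‖b‖ ^ 2 :=
  calc ‖a‖ ^ 2 ≤ (r + ‖b‖) ^ 2 := by
        gcongr
        exact (norm_le_norm_add_norm_sub' a b).trans (by rw [add_comm]; gcongr)
    _ ≤ 2 * r ^ 2 + 2 * ‖b‖ ^ 2 := by nlinarith [sq_nonneg (r - ‖b‖)]

theorem stmt_6_general {p : ℕ} (C : Set (EuclideanSpace ℝ (Fin p)))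
    (hCconv : Convex ℝ C)
    (P : EuclideanSpace ℝ (Fin p) → EuclideanSpace ℝ (Fin p))
    (hP : ∀ x, P x ∈ C ∧ ∀ y ∈ C, ‖x - P x‖ ≤ ‖x - y‖)
    (θstar : EuclideanSpace ℝ (Fin p)) (hθstar : θstar ∈ C)
    (g : EuclideanSpace ℝ (Fin p) → ℝ)
    (hgconv : ConvexOn ℝ Set.univ g) (hgdiff : Differentiable ℝ g)
    (L : ℝ)
    (hLip : ∀ x y, ‖gradient g x - gradient g y‖ ≤ L * ‖x - y‖)
    (ρ : ℝ) (hρ : 0 < ρ)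
    (w θplus : EuclideanSpace ℝ (Fin p))
    (hupd : θplus = w - (1 / ρ) • gradient g θplus) :
    ‖P θplus - θstar‖ ^ 2 ≤
      (1 + 4 * L ^ 2 / ρ ^ 2) * ‖w - θstar‖ ^ 2 -
        (2 / ρ) * (g w - g θstar) + (4 / ρ ^ 2) * ‖gradient g θstar‖ ^ 2 := by
  have hproj : ‖P θplus - θstar‖ ≤ ‖θplus - θstar‖ :=
    hCconv.norm_sub_le_of_forall_norm_sub_le (hP θplus).1 (hP θplus).2 hθstar
  have hstep := norm_implicit_gradient_step_sub_sq_le hgconv hgdiff (by positivity) hupd θstar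
  have hgrad := norm_sq_le_of_norm_sub_le (hLip w θstar)
  have hgrad' : (1 / ρ) ^ 2 * ‖gradient g w‖ ^ 2 ≤
      4 * L ^ 2 / ρ ^ 2 * ‖w - θstar‖ ^ 2 + 4 / ρ ^ 2 * ‖gradient g θstar‖ ^ 2 := by
    rw [show 4 * L ^ 2 / ρ ^ 2 = 4 * L ^ 2 * (1 / ρ) ^ 2 by ring,
      show 4 / ρ ^ 2 = 4 * (1 / ρ) ^ 2 by ring]
    nlinarith [mul_le_mul_of_nonneg_left hgrad (sq_nonneg (1 / ρ)),
      mul_nonneg (sq_nonneg (1 / ρ)) (sq_nonneg (L * ‖w - θstar‖)),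
      mul_nonneg (sq_nonneg (1 / ρ)) (sq_nonneg ‖gradient g θstar‖)]
  calc ‖P θplus - θstar‖ ^ 2 ≤ ‖θplus - θstar‖ ^ 2 := by gcongr
    _ ≤ ‖w - θstar‖ ^ 2 - 2 * (1 / ρ) * (g w - g θstar) + (1 / ρ) ^ 2 * ‖gradient g w‖ ^ 2 :=
      hstep
    _ ≤ _ := by rw [show 2 / ρ = 2 * (1 / ρ) by ring]; linarith

/-- One-step recursion bound for the projected implicit update, with an
L-Lipschitz gradient:
‖P_C(θ⁺) − θ*‖² ≤ (1 + 4L²/ρ²)‖w − θ*‖² − (2/ρ)(g(w) − g(θ*)) + (4/ρ²)‖∇g(θ*)‖². -/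
theorem stmt_6 {p : ℕ} (C : Set (EuclideanSpace ℝ (Fin p)))
    (hCne : C.Nonempty) (hCclosed : IsClosed C) (hCconv : Convex ℝ C)
    (P : EuclideanSpace ℝ (Fin p) → EuclideanSpace ℝ (Fin p))
    (hP : ∀ x, P x ∈ C ∧ ∀ y ∈ C, ‖x - P x‖ ≤ ‖x - y‖)
    (θstar : EuclideanSpace ℝ (Fin p)) (hθstar : θstar ∈ C)
    (g : EuclideanSpace ℝ (Fin p) → ℝ)
    (hgconv : ConvexOn ℝ Set.univ g) (hgdiff : Differentiable ℝ g)
    (L : ℝ) (hL : 0 < L)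
    (hLip : ∀ x y, ‖gradient g x - gradient g y‖ ≤ L * ‖x - y‖)
    (ρ : ℝ) (hρ : 0 < ρ)
    (w w' θplus : EuclideanSpace ℝ (Fin p)) (hw : w = P w')
    (hupd : θplus = w - (1 / ρ) • gradient g θplus) :
    ‖P θplus - θstar‖ ^ 2 ≤
      (1 + 4 * L ^ 2 / ρ ^ 2) * ‖w - θstar‖ ^ 2 -
        (2 / ρ) * (g w - g θstar) + (4 / ρ ^ 2) * ‖gradient g θstar‖ ^ 2 :=
  stmt_6_general C hCconv P hP θstar hθstar g hgconv hgdiff L hLip ρ hρ w θplus hupd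
end

section
/- Under the stochastic proximal distance setup, for every k ≥ 1, E[‖∇f_{ξ_k}(P_C(θ_{k−1}))‖²] ≤ 2(G² + r²L²) = c². -/
open MeasureTheory Filter Real

/-!
The implicit step is the resolvent of the monotone operator `∇f_i`, hence nonexpansive. As `θ*`
is the resolvent of `θ* + t ∇f_i(θ*)`, and projecting onto `C` moves points closer to `θ*`,
`‖P θ_k - θ*‖ ≤ ‖P θ_{k-1} - θ* - ρ_k⁻¹ ∇f_{ξ_k}(θ*)‖`. The resolvent is also injective, so
`θ_{k-1}` is a function of the earlier indices and hence independent of the uniform index `ξ_k`.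
Averaging over `ξ_k`, the cross term becomes `⟨P θ_{k-1} - θ*, ∑ᵢ ∇f_i(θ*)⟩ ≥ 0` (first-order
optimality of `θ*` on `C`), which leaves `E‖P θ_k - θ*‖² ≤ E‖P θ_{k-1} - θ*‖² + ρ_k⁻² G²`; summing,
`E‖P θ_k - θ*‖² ≤ r²`. Averaging the Lipschitz bound
`‖∇f_i(x)‖² ≤ 2‖∇f_i(θ*)‖² + 2L²‖x - θ*‖²` over `ξ_k` in the same way gives `c²`.
-/

open RealInnerProductSpace ProbabilityTheory Function

section ConvexAnalysis

variable {E : Type*} [NormedAddCommGroup E] [InnerProductSpace ℝ E]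

theorem ConvexOn.add_inner_gradient_le [CompleteSpace E] {f : E → ℝ}
    (hf : ConvexOn ℝ Set.univ f) {x : E} (hx : DifferentiableAt ℝ f x) (y : E) :
    f x + ⟪gradient f x, y - x⟫ ≤ f y := by
  have hline : ConvexOn ℝ Set.univ (f ∘ AffineMap.lineMap (k := ℝ) x y) := by
    simpa using hf.comp_affineMap (AffineMap.lineMap (k := ℝ) x y)
  have hderiv : HasDerivAt (f ∘ AffineMap.lineMap (k := ℝ) x y) ⟪gradient f x, y - x⟫ 0 := by
    rw [inner_gradient_left]
    have hx' : HasFDerivAt f (fderiv ℝ f x) (AffineMap.lineMap (k := ℝ) x y 0) := by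
      rw [AffineMap.lineMap_apply_zero]
      exact hx.hasFDerivAt
    exact hx'.comp_hasDerivAt 0 AffineMap.hasDerivAt_lineMap
  have := hline.le_slope_of_hasDerivAt (Set.mem_univ 0) (Set.mem_univ 1) one_pos hderiv
  simp only [slope, comp_apply, AffineMap.lineMap_apply_zero, AffineMap.lineMap_apply_one, sub_zero,
    inv_one, vsub_eq_sub, smul_eq_mul] at this
  linarith

theorem ConvexOn.inner_gradient_sub_gradient_nonneg [CompleteSpace E] {f : E → ℝ}
    (hf : ConvexOn ℝ Set.univ f) (hdiff : Differentiable ℝ f) (x y : E) :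
    0 ≤ ⟪gradient f x - gradient f y, x - y⟫ := by
  have hx := hf.add_inner_gradient_le (hdiff x) y
  have hy := hf.add_inner_gradient_le (hdiff y) x
  rw [← neg_sub x y, inner_neg_right] at hx
  rw [inner_sub_left]
  linarith

theorem inner_sum_gradient_sub_nonneg_of_isMinOn [CompleteSpace E] {ι : Type*} (s : Finset ι)
    {f : ι → E → ℝ} {C : Set E} {a w : E} (hf : ∀ i ∈ s, DifferentiableAt ℝ (f i) a)
    (hC : Convex ℝ C) (hmin : IsMinOn (∑ i ∈ s, f i) C a) (ha : a ∈ C) (hw : w ∈ C) :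
    0 ≤ ⟪∑ i ∈ s, gradient (f i) a, w - a⟫ := by
  have := hmin.localize.hasFDerivWithinAt_nonneg
    (HasFDerivAt.sum fun i hi => (hf i hi).hasFDerivAt).hasFDerivWithinAt
    (sub_mem_posTangentConeAt_of_segment_subset (hC.segment_subset ha hw))
  simpa [sum_inner, inner_gradient_left] using this

theorem norm_sub_le_of_eq_sub_smul {g : E → E} (hg : ∀ x y, 0 ≤ ⟪g x - g y, x - y⟫) {t : ℝ}
    (ht : 0 ≤ t) {a b u v : E} (hu : u = a - t • g u) (hv : v = b - t • g v) :
    ‖u - v‖ ≤ ‖a - b‖ := by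
  have hab : a - b = (u - v) + t • (g u - g v) := by
    rw [← eq_sub_iff_add_eq.mp hu, ← eq_sub_iff_add_eq.mp hv, smul_sub]
    abel
  have hsq : ‖u - v‖ ^ 2 ≤ ‖a - b‖ ^ 2 := by
    rw [hab, norm_add_sq_real, real_inner_smul_right, real_inner_comm]
    nlinarith [hg u v, sq_nonneg ‖t • (g u - g v)‖]
  exact pow_le_pow_iff_left₀ (norm_nonneg _) (norm_nonneg _) two_ne_zero |>.mp hsq

theorem norm_sub_le_of_forall_norm_sub_le {C : Set E} (hC : Convex ℝ C) {x p c : E} (hp : p ∈ C)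
    (hmin : ∀ y ∈ C, ‖x - p‖ ≤ ‖x - y‖) (hc : c ∈ C) : ‖p - c‖ ≤ ‖x - c‖ := by
  have : Nonempty C := ⟨⟨p, hp⟩⟩
  have hinf : ‖x - p‖ = ⨅ y : C, ‖x - y‖ :=
    le_antisymm (le_ciInf fun y => hmin y y.2)
      (ciInf_le ⟨0, by rintro _ ⟨y, rfl⟩; positivity⟩ (⟨p, hp⟩ : C))
  have hvar := (norm_eq_iInf_iff_real_inner_le_zero hC hp).mp hinf c hc
  have hsq : ‖p - c‖ ^ 2 ≤ ‖x - c‖ ^ 2 := by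
    have hexpand : ‖x - c‖ ^ 2 = ‖x - p‖ ^ 2 - 2 * ⟪x - p, c - p⟫ + ‖c - p‖ ^ 2 := by
      rw [← norm_sub_sq_real, sub_sub_sub_cancel_right]
    rw [hexpand, norm_sub_rev p c]
    nlinarith [sq_nonneg ‖x - p‖]
  exact pow_le_pow_iff_left₀ (norm_nonneg _) (norm_nonneg _) two_ne_zero |>.mp hsq

theorem sum_norm_sub_smul_sq {ι : Type*} (s : Finset ι) (d : E) (t : ℝ) (g : ι → E) :
    ∑ i ∈ s, ‖d - t • g i‖ ^ 2
      = s.card * ‖d‖ ^ 2 - 2 * t * ⟪d, ∑ i ∈ s, g i⟫ + t ^ 2 * ∑ i ∈ s, ‖g i‖ ^ 2 := by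
  simp only [norm_sub_sq_real, real_inner_smul_right, norm_smul, mul_pow, Real.norm_eq_abs, sq_abs,
    Finset.sum_add_distrib, Finset.sum_sub_distrib, inner_sum, Finset.sum_const, nsmul_eq_mul,
    ← Finset.mul_sum]
  ring

end ConvexAnalysis

section Independence

variable {Ω β : Type*} [MeasurableSpace Ω] {μ : Measure Ω} [MeasurableSpace β]

theorem Function.FactorsThrough.integrable [IsFiniteMeasure μ] [Finite β]
    [MeasurableSingletonClass β] {X : Ω → β} (hX : Measurable X) {Y : Ω → ℝ}
    (hY : FactorsThrough Y X) : Integrable Y μ := by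
  have hcomp : Y = extend X Y 0 ∘ X := funext fun ω => (hY.extend_apply 0 ω).symm
  rw [hcomp]
  exact Integrable.of_finite.comp_measurable hX

theorem Function.FactorsThrough.integrable_apply_comp [IsFiniteMeasure μ] [Finite β]
    [MeasurableSingletonClass β] {ι : Type*} [MeasurableSpace ι] [Finite ι]
    [MeasurableSingletonClass ι] {X : Ω → β} {Z : Ω → ι} (hX : Measurable X) (hZ : Measurable Z)
    {Y : ι → Ω → ℝ} (hY : ∀ i, FactorsThrough (Y i) X) : Integrable (fun ω => Y (Z ω) ω) μ := by
  refine FactorsThrough.integrable (X := fun ω => (X ω, Z ω)) (hX.prodMk hZ) ?_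
  intro ω ω' h
  simp only [Prod.mk.injEq] at h
  simp only [h.2]
  exact hY _ h.1

theorem ProbabilityTheory.IndepFun.integral_apply_comp [IsFiniteMeasure μ] [Finite β]
    [MeasurableSingletonClass β] {ι : Type*} [MeasurableSpace ι] [Fintype ι]
    [MeasurableSingletonClass ι] {X : Ω → β} {Z : Ω → ι} (hX : Measurable X) (hZ : Measurable Z)
    (hXZ : IndepFun X Z μ) {Y : ι → Ω → ℝ} (hY : ∀ i, FactorsThrough (Y i) X) :
    ∫ ω, Y (Z ω) ω ∂μ = ∑ i, μ.real {ω | Z ω = i} * ∫ ω, Y i ω ∂μ := by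
  classical
  set φ : ι → β → ℝ := fun i => extend X (Y i) 0
  set ψ : ι → ι → ℝ := fun i z => if z = i then 1 else 0
  have hφ : ∀ i ω, φ i (X ω) = Y i ω := fun i => (hY i).extend_apply 0
  have hsplit : (fun ω => Y (Z ω) ω) = fun ω => ∑ i, (φ i ∘ X) ω * (ψ i ∘ Z) ω := by
    ext ω
    simp [ψ, hφ]
  have hterm : ∀ i, ∫ ω, (φ i ∘ X) ω * (ψ i ∘ Z) ω ∂μ = μ.real {ω | Z ω = i} * ∫ ω, Y i ω ∂μ := by
    intro i
    have hind := hXZ.comp (measurable_of_finite (φ i)) (measurable_of_finite (ψ i))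
    rw [hind.integral_fun_mul_eq_mul_integral
      (measurable_of_finite _ |>.comp hX).aestronglyMeasurable
      (measurable_of_finite _ |>.comp hZ).aestronglyMeasurable, mul_comm]
    congr 1
    · exact integral_indicator_one (hZ (measurableSet_singleton i))
    · simp only [comp_apply, hφ]
  rw [hsplit, integral_finsetSum]
  · exact Finset.sum_congr rfl fun i _ => hterm i
  · intro i _
    exact FactorsThrough.integrable (hX.prodMk hZ) fun ω ω' h => by
      simp only [Prod.mk.injEq] at h
      simp only [comp_apply, h.1, h.2]

theorem ProbabilityTheory.iIndepFun.indepFun_fin_prefix {ξ : ℕ → Ω → β}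
    (hmeas : ∀ k, Measurable (ξ k)) (hind : iIndepFun ξ μ) (k : ℕ) :
    IndepFun (fun ω (j : Fin k) => ξ j ω) (ξ k) μ :=
  (hind.indepFun_finset (Finset.range k) {k} (by simp) hmeas).comp
    (φ := fun v (j : Fin k) => v ⟨j, by simp⟩) (ψ := fun v => v ⟨k, by simp⟩)
    (measurable_pi_lambda _ fun _ => measurable_pi_apply _) (measurable_pi_apply _)

theorem integral_apply_uniform_index [IsProbabilityMeasure μ] {n : ℕ} {ξ : ℕ → Ω → Fin n}
    (hmeas : ∀ k, Measurable (ξ k)) (hind : iIndepFun ξ μ) {k : ℕ}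
    (hunif : ∀ i, μ {ω | ξ k ω = i} = (n : ENNReal)⁻¹) {Y : Fin n → Ω → ℝ}
    (hY : ∀ i, FactorsThrough (Y i) (fun ω (j : Fin k) => ξ j ω)) :
    ∫ ω, Y (ξ k ω) ω ∂μ = ∫ ω, (n : ℝ)⁻¹ * ∑ i, Y i ω ∂μ := by
  have hX : Measurable (fun ω (j : Fin k) => ξ j ω) := measurable_pi_lambda _ fun j => hmeas j
  rw [(hind.indepFun_fin_prefix hmeas k).integral_apply_comp hX (hmeas k) hY, integral_const_mul,
    integral_finsetSum _ fun i _ => (hY i).integrable hX, Finset.mul_sum]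
  simp [measureReal_def, hunif]

end Independence

theorem le_add_sum_of_le_add {a b : ℕ → ℝ} (h : ∀ m, a (m + 1) ≤ a m + b m) (m : ℕ) :
    a m ≤ a 0 + ∑ j ∈ Finset.range m, b j := by
  induction m with
  | zero => simp
  | succ m ih => rw [Finset.sum_range_succ]; linarith [h m]

section ImplicitStep

variable {Ω E : Type*} [NormedAddCommGroup E] [InnerProductSpace ℝ E]

theorem factorsThrough_prefix_of_eq_sub_smul {ι : Type*} {g : ι → E → E}
    (hg : ∀ i x y, 0 ≤ ⟪g i x - g i y, x - y⟫) {t : ℕ → ℝ} (ht : ∀ k, 0 ≤ t k) {P : E → E}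
    {ξ : ℕ → Ω → ι} {θ : ℕ → Ω → E} {θ₀ : E} (hθ0 : ∀ ω, θ 0 ω = θ₀)
    (hstep : ∀ k ω, θ (k + 1) ω = P (θ k ω) - t (k + 1) • g (ξ (k + 1) ω) (θ (k + 1) ω))
    (m : ℕ) : FactorsThrough (θ m) (fun ω (j : Fin (m + 1)) => ξ j ω) := by
  induction m with
  | zero => exact fun ω ω' _ => (hθ0 ω).trans (hθ0 ω').symm
  | succ m ih =>
    intro ω ω' h
    have hprev : θ m ω = θ m ω' := ih <| funext fun j => by simpa using congrFun h j.castSucc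
    have hlast : ξ (m + 1) ω = ξ (m + 1) ω' := by simpa using congrFun h (Fin.last (m + 1))
    have hstep' := hstep m ω'
    rw [← hprev, ← hlast] at hstep'
    have := norm_sub_le_of_eq_sub_smul (hg _) (ht _) (hstep m ω) hstep'
    rwa [sub_self, norm_zero, norm_le_zero_iff, sub_eq_zero] at this

variable [MeasurableSpace Ω] {μ : Measure Ω}

theorem integral_norm_sq_succ_le [IsProbabilityMeasure μ] {n : ℕ} (hn : n ≠ 0)
    {g : Fin n → E → E} (hg : ∀ i x y, 0 ≤ ⟪g i x - g i y, x - y⟫) {t : ℝ} (ht : 0 ≤ t)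
    {P : E → E} {θstar : E} (hP : ∀ x, ‖P x - θstar‖ ≤ ‖x - θstar‖)
    (hopt : ∀ x, 0 ≤ ⟪P x - θstar, ∑ i, g i θstar⟫) {ξ : ℕ → Ω → Fin n}
    (hmeas : ∀ k, Measurable (ξ k)) (hind : iIndepFun ξ μ) {m : ℕ}
    (hunif : ∀ i, μ {ω | ξ (m + 1) ω = i} = (n : ENNReal)⁻¹) {θ θ' : Ω → E}
    (hθ : FactorsThrough θ (fun ω (j : Fin (m + 1)) => ξ j ω))
    (hstep : ∀ ω, θ' ω = P (θ ω) - t • g (ξ (m + 1) ω) (θ' ω)) :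
    ∫ ω, ‖P (θ' ω) - θstar‖ ^ 2 ∂μ
      ≤ ∫ ω, ‖P (θ ω) - θstar‖ ^ 2 ∂μ + t ^ 2 * ((n : ℝ)⁻¹ * ∑ i, ‖g i θstar‖ ^ 2) := by
  have hX : Measurable (fun ω (j : Fin (m + 1)) => ξ j ω) :=
    measurable_pi_lambda _ fun j => hmeas j
  set Y : Fin n → Ω → ℝ := fun i ω => ‖P (θ ω) - θstar - t • g i θstar‖ ^ 2
  have hY : ∀ i, FactorsThrough (Y i) (fun ω (j : Fin (m + 1)) => ξ j ω) :=
    fun i ω ω' h => by simp only [Y, hθ h]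
  have hpoint : ∀ ω, ‖P (θ' ω) - θstar‖ ^ 2 ≤ Y (ξ (m + 1) ω) ω := by
    intro ω
    have hfix : θstar = (θstar + t • g (ξ (m + 1) ω) θstar) - t • g (ξ (m + 1) ω) θstar := by
      abel
    have := norm_sub_le_of_eq_sub_smul (hg _) ht (hstep ω) hfix
    rw [sub_add_eq_sub_sub] at this
    exact pow_le_pow_left₀ (norm_nonneg _) ((hP _).trans this) 2
  have havg : ∀ ω, (n : ℝ)⁻¹ * ∑ i, Y i ω
      ≤ ‖P (θ ω) - θstar‖ ^ 2 + t ^ 2 * ((n : ℝ)⁻¹ * ∑ i, ‖g i θstar‖ ^ 2) := by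
    intro ω
    have hcross := mul_nonneg ht (hopt (θ ω))
    simp only [Y, sum_norm_sub_smul_sq, Finset.card_univ, Fintype.card_fin]
    field_simp
    nlinarith
  have hDint : Integrable (fun ω => ‖P (θ ω) - θstar‖ ^ 2) μ :=
    FactorsThrough.integrable hX fun ω ω' h => by simp only [hθ h]
  calc ∫ ω, ‖P (θ' ω) - θstar‖ ^ 2 ∂μ
      ≤ ∫ ω, Y (ξ (m + 1) ω) ω ∂μ :=
        integral_mono_of_nonneg (ae_of_all _ fun _ => by positivity)
          (FactorsThrough.integrable_apply_comp hX (hmeas _) hY) (ae_of_all _ hpoint)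
    _ = ∫ ω, (n : ℝ)⁻¹ * ∑ i, Y i ω ∂μ := integral_apply_uniform_index hmeas hind hunif hY
    _ ≤ ∫ ω, (‖P (θ ω) - θstar‖ ^ 2 + t ^ 2 * ((n : ℝ)⁻¹ * ∑ i, ‖g i θstar‖ ^ 2)) ∂μ :=
        integral_mono ((integrable_finsetSum _ fun i _ => (hY i).integrable hX).const_mul _)
          (hDint.add (integrable_const _)) havg
    _ = _ := by rw [integral_add hDint (integrable_const _), integral_const]; simp

theorem integral_norm_sq_le_add_sum [IsProbabilityMeasure μ] {n : ℕ} (hn : n ≠ 0)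
    {g : Fin n → E → E} (hg : ∀ i x y, 0 ≤ ⟪g i x - g i y, x - y⟫) {t : ℕ → ℝ}
    (ht : ∀ k, 0 ≤ t k) {P : E → E} {θstar : E} (hP : ∀ x, ‖P x - θstar‖ ≤ ‖x - θstar‖)
    (hopt : ∀ x, 0 ≤ ⟪P x - θstar, ∑ i, g i θstar⟫) {ξ : ℕ → Ω → Fin n}
    (hmeas : ∀ k, Measurable (ξ k)) (hind : iIndepFun ξ μ)
    (hunif : ∀ k, 1 ≤ k → ∀ i, μ {ω | ξ k ω = i} = (n : ENNReal)⁻¹) {θ : ℕ → Ω → E} {θ₀ : E}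
    (hθ0 : ∀ ω, θ 0 ω = θ₀)
    (hstep : ∀ k ω, θ (k + 1) ω = P (θ k ω) - t (k + 1) • g (ξ (k + 1) ω) (θ (k + 1) ω))
    (m : ℕ) :
    ∫ ω, ‖P (θ m ω) - θstar‖ ^ 2 ∂μ ≤ ‖P θ₀ - θstar‖ ^ 2
      + ∑ j ∈ Finset.range m, t (j + 1) ^ 2 * ((n : ℝ)⁻¹ * ∑ i, ‖g i θstar‖ ^ 2) := by
  have := le_add_sum_of_le_add (a := fun k => ∫ ω, ‖P (θ k ω) - θstar‖ ^ 2 ∂μ)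
    (fun k => integral_norm_sq_succ_le hn hg (ht (k + 1)) hP hopt hmeas hind
      (hunif _ (Nat.le_add_left 1 k)) (factorsThrough_prefix_of_eq_sub_smul hg ht hθ0 hstep k)
      (hstep k)) m
  simpa [hθ0] using this

end ImplicitStep

theorem integral_norm_sq_apply_le {Ω E : Type*} [MeasurableSpace Ω] {μ : Measure Ω}
    [IsProbabilityMeasure μ] [NormedAddCommGroup E] {n : ℕ} (hn : n ≠ 0)
    {g : Fin n → E → E} {L : ℝ} (hLip : ∀ i x y, ‖g i x - g i y‖ ≤ L * ‖x - y‖)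
    {ξ : ℕ → Ω → Fin n} (hmeas : ∀ k, Measurable (ξ k)) (hind : iIndepFun ξ μ) {k : ℕ}
    (hunif : ∀ i, μ {ω | ξ k ω = i} = (n : ENNReal)⁻¹) {X : Ω → E}
    (hX : FactorsThrough X (fun ω (j : Fin k) => ξ j ω)) (θstar : E) :
    ∫ ω, ‖g (ξ k ω) (X ω)‖ ^ 2 ∂μ
      ≤ 2 * ((n : ℝ)⁻¹ * ∑ i, ‖g i θstar‖ ^ 2) + 2 * L ^ 2 * ∫ ω, ‖X ω - θstar‖ ^ 2 ∂μ := by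
  have hH : Measurable (fun ω (j : Fin k) => ξ j ω) := measurable_pi_lambda _ fun j => hmeas j
  set Y : Fin n → Ω → ℝ := fun i ω => ‖g i (X ω)‖ ^ 2
  have hY : ∀ i, FactorsThrough (Y i) (fun ω (j : Fin k) => ξ j ω) :=
    fun i ω ω' h => by simp only [Y, hX h]
  have hpoint : ∀ i x, ‖g i x‖ ^ 2 ≤ 2 * ‖g i θstar‖ ^ 2 + 2 * L ^ 2 * ‖x - θstar‖ ^ 2 := by
    intro i x
    have : ‖g i x‖ ≤ ‖g i θstar‖ + L * ‖x - θstar‖ := by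
      linarith [norm_le_norm_add_norm_sub' (g i x) (g i θstar), hLip i x θstar]
    nlinarith [norm_nonneg (g i x), sq_nonneg (‖g i θstar‖ - L * ‖x - θstar‖)]
  have havg : ∀ ω, (n : ℝ)⁻¹ * ∑ i, Y i ω
      ≤ 2 * ((n : ℝ)⁻¹ * ∑ i, ‖g i θstar‖ ^ 2) + 2 * L ^ 2 * ‖X ω - θstar‖ ^ 2 := by
    intro ω
    have := Finset.sum_le_sum fun i (_ : i ∈ Finset.univ) => hpoint i (X ω)
    rw [Finset.sum_add_distrib, ← Finset.mul_sum, Finset.sum_const, Finset.card_univ,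
      Fintype.card_fin, nsmul_eq_mul] at this
    have hn' : (0 : ℝ) < n := by positivity
    calc (n : ℝ)⁻¹ * ∑ i, Y i ω ≤ (n : ℝ)⁻¹ * (2 * ∑ i, ‖g i θstar‖ ^ 2
          + n * (2 * L ^ 2 * ‖X ω - θstar‖ ^ 2)) := by gcongr
      _ = _ := by field_simp
  have hDint : Integrable (fun ω => ‖X ω - θstar‖ ^ 2) μ :=
    FactorsThrough.integrable hH fun ω ω' h => by simp only [hX h]
  calc ∫ ω, ‖g (ξ k ω) (X ω)‖ ^ 2 ∂μ = ∫ ω, (n : ℝ)⁻¹ * ∑ i, Y i ω ∂μ :=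
        integral_apply_uniform_index hmeas hind hunif hY
    _ ≤ ∫ ω, (2 * ((n : ℝ)⁻¹ * ∑ i, ‖g i θstar‖ ^ 2) + 2 * L ^ 2 * ‖X ω - θstar‖ ^ 2) ∂μ :=
        integral_mono ((integrable_finsetSum _ fun i _ => (hY i).integrable hH).const_mul _)
          ((integrable_const _).add (hDint.const_mul _)) havg
    _ = _ := by rw [integral_add (integrable_const _) (hDint.const_mul _), integral_const,
          integral_const_mul]; simp

theorem sum_range_inv_mul_rpow_sq_le {γ : ℝ} (hγ : 1 / 2 < γ) (ρ₁ : ℝ) (m : ℕ) :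
    ∑ j ∈ Finset.range m, ((ρ₁ * ((j + 1 : ℕ) : ℝ) ^ γ)⁻¹) ^ 2
      ≤ (∑' j : ℕ, ((j : ℝ) + 1) ^ (-(2 * γ))) / ρ₁ ^ 2 := by
  have hterm : ∀ j : ℕ, ((ρ₁ * ((j + 1 : ℕ) : ℝ) ^ γ)⁻¹) ^ 2
      = ((j : ℝ) + 1) ^ (-(2 * γ)) / ρ₁ ^ 2 := by
    intro j
    rw [Real.rpow_neg (by positivity), mul_comm 2 γ, Real.rpow_mul (by positivity), Real.rpow_two]
    push_cast
    field_simp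
  have hsum : Summable fun j : ℕ => ((j : ℝ) + 1) ^ (-(2 * γ)) := by
    have := (summable_nat_add_iff 1).mpr (Real.summable_nat_rpow.mpr (by linarith : -(2 * γ) < -1))
    simpa using this
  simp only [hterm, ← Finset.sum_div]
  gcongr
  exact hsum.sum_le_tsum _ fun j _ => by positivity

theorem stmt_8_general {p n : ℕ} (hn : 1 ≤ n)
    (f : Fin n → EuclideanSpace ℝ (Fin p) → ℝ)
    (hfconv : ∀ i, ConvexOn ℝ Set.univ (f i))
    (hfdiff : ∀ i, Differentiable ℝ (f i))
    (L : ℝ)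
    (hLip : ∀ i x y, ‖gradient (f i) x - gradient (f i) y‖ ≤ L * ‖x - y‖)
    (F : EuclideanSpace ℝ (Fin p) → ℝ)
    (hF : ∀ θ', F θ' = (1 / n : ℝ) * ∑ i, f i θ')
    (C : Set (EuclideanSpace ℝ (Fin p)))
    (hCconv : Convex ℝ C)
    (P : EuclideanSpace ℝ (Fin p) → EuclideanSpace ℝ (Fin p))
    (hP : ∀ x, P x ∈ C ∧ ∀ y ∈ C, ‖x - P x‖ ≤ ‖x - y‖)
    (θstar : EuclideanSpace ℝ (Fin p))
    (hθstar : θstar ∈ C ∧ ∀ θ' ∈ C, F θstar ≤ F θ')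
    (ρ₁ γ : ℝ) (hρ₁ : 0 < ρ₁) (hγ : 1 / 2 < γ ∧ γ ≤ 1)
    (ρ : ℕ → ℝ) (hρ : ∀ k : ℕ, ρ k = ρ₁ * (k : ℝ) ^ γ)
    {Ω : Type*} [MeasurableSpace Ω] (Pr : Measure Ω) [IsProbabilityMeasure Pr]
    (ξ : ℕ → Ω → Fin n) (hξmeas : ∀ k, Measurable (ξ k))
    (hξindep : ProbabilityTheory.iIndepFun ξ Pr)
    (hξunif : ∀ k, 1 ≤ k → ∀ i : Fin n, Pr {ω | ξ k ω = i} = (n : ENNReal)⁻¹)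
    (θ₀ : EuclideanSpace ℝ (Fin p))
    (θ : ℕ → Ω → EuclideanSpace ℝ (Fin p))
    (hθ0 : ∀ ω, θ 0 ω = θ₀)
    (hupdate : ∀ k, 1 ≤ k → ∀ ω,
      θ k ω = P (θ (k - 1) ω) - (ρ k)⁻¹ • gradient (f (ξ k ω)) (θ k ω))
    (G s r : ℝ)
    (hG : G ^ 2 = (1 / n : ℝ) * ∑ i, ‖gradient (f i) θstar‖ ^ 2)
    (hs : s = ∑' k : ℕ, ((k : ℝ) + 1) ^ (-(2 * γ)))
    (hr : r ^ 2 = Real.exp (4 * L ^ 2 * s / ρ₁ ^ 2) *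
      (4 * G ^ 2 * s / ρ₁ ^ 2 + ‖P θ₀ - θstar‖ ^ 2))
    (c : ℝ) (hc : c ^ 2 = 2 * (G ^ 2 + r ^ 2 * L ^ 2)) :
    ∀ k : ℕ, 1 ≤ k →
      (∫ ω, ‖gradient (f (ξ k ω)) (P (θ (k - 1) ω))‖ ^ 2 ∂Pr) ≤ c ^ 2 := by
  have hn0 : n ≠ 0 := by omega
  have hG' : (n : ℝ)⁻¹ * ∑ i, ‖gradient (f i) θstar‖ ^ 2 = G ^ 2 := by rw [hG, one_div]
  have ht : ∀ k, 0 ≤ (ρ k)⁻¹ := fun k => by rw [hρ]; positivity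
  have hmono : ∀ i x y, 0 ≤ ⟪gradient (f i) x - gradient (f i) y, x - y⟫ :=
    fun i => (hfconv i).inner_gradient_sub_gradient_nonneg (hfdiff i)
  have hstep : ∀ k ω, θ (k + 1) ω
      = P (θ k ω) - (ρ (k + 1))⁻¹ • gradient (f (ξ (k + 1) ω)) (θ (k + 1) ω) :=
    fun k => hupdate (k + 1) (Nat.le_add_left 1 k)
  have hproj : ∀ x, ‖P x - θstar‖ ≤ ‖x - θstar‖ :=
    fun x => norm_sub_le_of_forall_norm_sub_le hCconv (hP x).1 (hP x).2 hθstar.1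
  have hmin : IsMinOn (∑ i, f i) C θstar := fun x hx => by
    have := hθstar.2 x hx
    rw [hF, hF] at this
    simpa [Finset.sum_apply] using le_of_mul_le_mul_left this (by positivity)
  have hopt : ∀ x, 0 ≤ ⟪P x - θstar, ∑ i, gradient (f i) θstar⟫ := fun x => by
    rw [real_inner_comm]
    exact inner_sum_gradient_sub_nonneg_of_isMinOn _ (fun i _ => hfdiff i θstar) hCconv hmin
      hθstar.1 (hP x).1
  have hmean : ∀ m, ∫ ω, ‖P (θ m ω) - θstar‖ ^ 2 ∂Pr ≤ r ^ 2 := fun m => calc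
    _ ≤ ‖P θ₀ - θstar‖ ^ 2 + ∑ j ∈ Finset.range m, ((ρ (j + 1))⁻¹) ^ 2 * G ^ 2 := by
        simpa only [hG'] using integral_norm_sq_le_add_sum hn0 hmono ht hproj hopt hξmeas hξindep
          hξunif hθ0 hstep m
    _ ≤ ‖P θ₀ - θstar‖ ^ 2 + G ^ 2 * s / ρ₁ ^ 2 := by
        rw [← Finset.sum_mul, mul_comm _ (G ^ 2), mul_div_assoc]
        gcongr
        simpa only [hρ, hs] using sum_range_inv_mul_rpow_sq_le hγ.1 ρ₁ m
    _ ≤ r ^ 2 := by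
        have hs0 : 0 ≤ s := hs ▸ tsum_nonneg fun j => by positivity
        rw [hr]
        refine le_trans ?_ (le_mul_of_one_le_left (by positivity) (Real.one_le_exp (by positivity)))
        linarith [show 0 ≤ G ^ 2 * s / ρ₁ ^ 2 by positivity,
          show 4 * G ^ 2 * s / ρ₁ ^ 2 = 4 * (G ^ 2 * s / ρ₁ ^ 2) by ring]
  intro k hk
  obtain ⟨m, rfl⟩ := Nat.exists_eq_add_of_le' hk
  calc ∫ ω, ‖gradient (f (ξ (m + 1) ω)) (P (θ (m + 1 - 1) ω))‖ ^ 2 ∂Pr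
      ≤ 2 * G ^ 2 + 2 * L ^ 2 * ∫ ω, ‖P (θ m ω) - θstar‖ ^ 2 ∂Pr := by
        simpa [hG'] using integral_norm_sq_apply_le hn0 hLip hξmeas hξindep (hξunif _ hk)
          (fun ω ω' h => congrArg P (factorsThrough_prefix_of_eq_sub_smul hmono ht hθ0 hstep m h))
          θstar
    _ ≤ c ^ 2 := by
        rw [hc]
        nlinarith [mul_le_mul_of_nonneg_left (hmean m) (sq_nonneg L)]

set_option maxHeartbeats 1000000 in
/-- Proposition 2(b): E‖∇f_{ξ_k}(P_C(θ_{k−1}))‖² ≤ c² = 2(G² + r²L²). -/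
theorem stmt_8 {p n : ℕ} (hn : 1 ≤ n)
    (f : Fin n → EuclideanSpace ℝ (Fin p) → ℝ)
    (hfconv : ∀ i, ConvexOn ℝ Set.univ (f i))
    (hfdiff : ∀ i, Differentiable ℝ (f i))
    (L : ℝ) (hL : 0 < L)
    (hLip : ∀ i x y, ‖gradient (f i) x - gradient (f i) y‖ ≤ L * ‖x - y‖)
    (F : EuclideanSpace ℝ (Fin p) → ℝ)
    (hF : ∀ θ', F θ' = (1 / n : ℝ) * ∑ i, f i θ')
    (hFcont : Continuous F) (hFstrict : StrictConvexOn ℝ Set.univ F)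
    (hFcoercive : Tendsto F (comap norm atTop) atTop)
    (C : Set (EuclideanSpace ℝ (Fin p)))
    (hCne : C.Nonempty) (hCclosed : IsClosed C) (hCconv : Convex ℝ C)
    (P : EuclideanSpace ℝ (Fin p) → EuclideanSpace ℝ (Fin p))
    (hP : ∀ x, P x ∈ C ∧ ∀ y ∈ C, ‖x - P x‖ ≤ ‖x - y‖)
    (θstar : EuclideanSpace ℝ (Fin p))
    (hθstar : θstar ∈ C ∧ ∀ θ' ∈ C, F θstar ≤ F θ')
    (ρ₁ γ : ℝ) (hρ₁ : 0 < ρ₁) (hγ : 1 / 2 < γ ∧ γ ≤ 1)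
    (ρ : ℕ → ℝ) (hρ : ∀ k : ℕ, ρ k = ρ₁ * (k : ℝ) ^ γ)
    {Ω : Type*} [MeasurableSpace Ω] (Pr : Measure Ω) [IsProbabilityMeasure Pr]
    (ξ : ℕ → Ω → Fin n) (hξmeas : ∀ k, Measurable (ξ k))
    (hξindep : ProbabilityTheory.iIndepFun ξ Pr)
    (hξunif : ∀ k, 1 ≤ k → ∀ i : Fin n, Pr {ω | ξ k ω = i} = (n : ENNReal)⁻¹)
    (θ₀ : EuclideanSpace ℝ (Fin p))
    (θ : ℕ → Ω → EuclideanSpace ℝ (Fin p))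
    (hθ0 : ∀ ω, θ 0 ω = θ₀) (hθmeas : ∀ k, Measurable (θ k))
    (hupdate : ∀ k, 1 ≤ k → ∀ ω,
      θ k ω = P (θ (k - 1) ω) - (ρ k)⁻¹ • gradient (f (ξ k ω)) (θ k ω))
    (G s r : ℝ) (hGnn : 0 ≤ G) (hrnn : 0 ≤ r)
    (hG : G ^ 2 = (1 / n : ℝ) * ∑ i, ‖gradient (f i) θstar‖ ^ 2)
    (hs : s = ∑' k : ℕ, ((k : ℝ) + 1) ^ (-(2 * γ)))
    (hr : r ^ 2 = Real.exp (4 * L ^ 2 * s / ρ₁ ^ 2) *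
      (4 * G ^ 2 * s / ρ₁ ^ 2 + ‖P θ₀ - θstar‖ ^ 2))
    (c : ℝ) (hcnn : 0 ≤ c) (hc : c ^ 2 = 2 * (G ^ 2 + r ^ 2 * L ^ 2)) :
    ∀ k : ℕ, 1 ≤ k →
      (∫ ω, ‖gradient (f (ξ k ω)) (P (θ (k - 1) ω))‖ ^ 2 ∂Pr) ≤ c ^ 2 :=
  stmt_8_general hn f hfconv hfdiff L hLip F hF C hCconv P hP θstar hθstar ρ₁ γ hρ₁ hγ ρ hρ Pr ξ
    hξmeas hξindep hξunif θ₀ θ hθ0 hupdate G s r hG hs hr c hc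
end
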